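/- arXiv:1402.6140 — 8 statements merged into one kernel-verified Lean document; each statement's English description precedes it below -/
import Mathlib

section
/- For every real λ, the characteristic functions of the normalized random walks converge: lim_{n→∞} ((1/N)·Σ_{k=0}^{N−1} exp(iλβω_k / n^{1/N}))^n = exp(i^N · α · λ^N / N!). -/
open Complex Real Filter Finset

open Topology Asymptotics

open scoped Nat

/-! Averaging `exp (z ω)` over the `N`-th roots of unity `ω` kills every Taylor coefficient
whose degree is not a multiple of `N`, so the average is `1 + z ^ N / N! + O(z ^ (N + 1))`.
For `z = i λ β n^(-1/N)` we have `z ^ N = i ^ N α λ ^ N / n`, and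
`(1 + t / n + o(1 / n)) ^ n → exp t`. -/

theorem IsPrimitiveRoot.geom_sum_pow_eq_ite {R : Type*} [CommRing R] [IsDomain R] {ζ : R}
    {N : ℕ} (hζ : IsPrimitiveRoot ζ N) (j : ℕ) :
    ∑ k ∈ range N, (ζ ^ j) ^ k = if N ∣ j then (N : R) else 0 := by
  split_ifs with hj
  · simp [(hζ.pow_eq_one_iff_dvd j).2 hj]
  · have hne : ζ ^ j - 1 ≠ 0 := sub_ne_zero.2 fun h => hj ((hζ.pow_eq_one_iff_dvd j).1 h)
    refine (mul_eq_zero.1 ?_).resolve_right hne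
    rw [geom_sum_mul, ← pow_mul, mul_comm, pow_mul, hζ.pow_eq_one, one_pow, sub_self]

theorem IsPrimitiveRoot.sum_sum_range_succ_pow_div_factorial {K : Type*} [Field K] [CharZero K]
    {ζ : K} {N : ℕ} (hζ : IsPrimitiveRoot ζ N) (hN : 0 < N) (z : K) :
    ∑ k ∈ range N, ∑ j ∈ range (N + 1), (z * ζ ^ k) ^ j / (j ! : K)
      = N * (1 + z ^ N / (N ! : K)) := by
  have hinner (j : ℕ) : ∑ k ∈ range N, (z * ζ ^ k) ^ j / (j ! : K)
      = if N ∣ j then N * (z ^ j / (j ! : K)) else 0 := by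
    have hterm (k : ℕ) : (z * ζ ^ k) ^ j / (j ! : K) = (ζ ^ j) ^ k * (z ^ j / (j ! : K)) := by
      rw [mul_pow, pow_right_comm]; ring
    rw [sum_congr rfl fun k _ => hterm k, ← sum_mul, hζ.geom_sum_pow_eq_ite j]
    split_ifs <;> simp
  rw [sum_comm, sum_congr rfl fun j _ => hinner j,
    sum_eq_add_of_mem 0 N (by simp) (by simp) hN.ne]
  · simp; ring
  · rintro j hj ⟨hj0, hjN⟩
    have hndvd : ¬ N ∣ j := fun h => hj0 (Nat.eq_zero_of_dvd_of_lt h (by simp at hj; omega))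
    simp [hndvd]

noncomputable def meanExpRootsOfUnity (N : ℕ) (z : ℂ) : ℂ :=
  (1 / (N : ℂ)) * ∑ k ∈ range N, exp (z * exp (2 * π * I * k / N))

theorem meanExpRootsOfUnity_sub_isBigO {N : ℕ} (hN : 0 < N) :
    (fun z => meanExpRootsOfUnity N z - (1 + z ^ N / (N ! : ℂ))) =O[𝓝 0] (· ^ (N + 1)) := by
  have hζ := isPrimitiveRoot_exp N hN.ne'
  set ζ := exp (2 * π * I / N)
  have hω (k : ℕ) : exp (2 * π * I * k / N) = ζ ^ k := by
    rw [← Complex.exp_nat_mul]; ring_nf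
  have hNC : (N : ℂ) ≠ 0 := by exact_mod_cast hN.ne'
  have hrem (z : ℂ) : meanExpRootsOfUnity N z - (1 + z ^ N / (N ! : ℂ)) =
      (1 / (N : ℂ)) * ∑ k ∈ range N,
        (exp (z * ζ ^ k) - ∑ j ∈ range (N + 1), (z * ζ ^ k) ^ j / (j ! : ℂ)) := by
    rw [sum_sub_distrib, hζ.sum_sum_range_succ_pow_div_factorial hN, meanExpRootsOfUnity]
    simp_rw [hω]
    field_simp
  simp_rw [hrem]
  refine .const_mul_left (.fun_sum fun k _ => ?_) _
  have hscale : Tendsto (fun z : ℂ => z * ζ ^ k) (𝓝 0) (𝓝 0) := by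
    simpa using (continuous_mul_const (ζ ^ k)).tendsto 0
  refine ((Complex.exp_sub_sum_range_isBigO_pow (N + 1)).comp_tendsto hscale).trans ?_
  simp_rw [Function.comp_def, mul_pow, mul_comm _ ((ζ ^ k) ^ (N + 1))]
  exact (isBigO_refl _ _).const_mul_left _

theorem tendsto_meanExpRootsOfUnity_pow {N : ℕ} (hN : 0 < N) {z : ℕ → ℂ} {w : ℂ}
    (hz : Tendsto z atTop (𝓝 0)) (hzN : ∀ᶠ n in atTop, z n ^ N = w / n) :
    Tendsto (fun n => meanExpRootsOfUnity N (z n) ^ n) atTop (𝓝 (exp (w / N !))) := by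
  refine tendsto_pow_exp_of_isLittleO_sub_add_div _ ?_
  have hsmall : (fun n : ℕ => z n ^ (N + 1)) =o[atTop] fun n => 1 / (n : ℂ) := by
    have : (fun n : ℕ => z n * (1 / (n : ℂ))) =o[atTop] fun n => 1 / (n : ℂ) := by
      simpa using ((isLittleO_one_iff ℂ).2 hz).mul_isBigO (isBigO_refl _ _)
    refine (this.const_mul_left w).congr' ?_ .rfl
    filter_upwards [hzN] with n hn
    rw [pow_succ, hn]; ring
  refine IsBigO.trans_isLittleO ?_ hsmall
  refine ((meanExpRootsOfUnity_sub_isBigO hN).comp_tendsto hz).congr' ?_ .rfl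
  filter_upwards [hzN] with n hn
  simp only [Function.comp_apply, hn, div_right_comm w]

/-- The characteristic functions of the normalized random walks
S̃_n = n^{-1/N}(ξ_1 + … + ξ_n), with ξ_j i.i.d. uniform on {β·exp(2πik/N)}_{k<N}
and β^N = α, converge: for every real λ,
lim_n ((1/N)·Σ_{k<N} exp(iλβω_k/n^{1/N}))^n = exp(i^N α λ^N / N!). -/
theorem clt_for_xi (N : ℕ) (hN : 2 < N) (α β : ℂ) (hβ : β ^ N = α) (l : ℝ) :
    Filter.Tendsto
      (fun n : ℕ =>
        ((1 / (N : ℂ)) *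
          ∑ k ∈ Finset.range N,
            Complex.exp (Complex.I * l * β * Complex.exp (2 * Real.pi * Complex.I * k / N) /
              ((((n : ℝ) ^ ((N : ℝ)⁻¹)) : ℝ) : ℂ))) ^ n)
      Filter.atTop
      (nhds (Complex.exp (Complex.I ^ N * α * (l : ℂ) ^ N / (Nat.factorial N : ℂ)))) := by
  subst hβ
  set r : ℕ → ℝ := fun n => (n : ℝ) ^ (N : ℝ)⁻¹
  have hr : Tendsto r atTop atTop :=
    (tendsto_rpow_atTop (by positivity)).comp tendsto_natCast_atTop_atTop
  have hz : Tendsto (fun n => I * l * β / r n) atTop (𝓝 0) := by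
    have hinv : Tendsto (fun n => ((r n)⁻¹ : ℂ)) atTop (𝓝 0) := by
      simpa [Function.comp_def] using
        (continuous_ofReal.tendsto 0).comp (tendsto_inv_atTop_zero.comp hr)
    simpa [div_eq_mul_inv] using hinv.const_mul (I * l * β)
  have hzN (n : ℕ) : (I * l * β / r n) ^ N = I ^ N * β ^ N * l ^ N / n := by
    have : (r n : ℂ) ^ N = n := by
      rw [← ofReal_pow, ← Real.rpow_natCast, ← Real.rpow_mul (by positivity),
        inv_mul_cancel₀ (by positivity), Real.rpow_one, ofReal_natCast]
    rw [div_pow, this]; ring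
  convert tendsto_meanExpRootsOfUnity_pow (by omega) hz (.of_forall hzN) using 3 with n
  simp only [meanExpRootsOfUnity, div_mul_eq_mul_div, r]
end

section
/- If m is a natural number that is not a multiple of N, then for every n ≥ 1 the m-th moment of the normalized random walk S̃_n vanishes exactly: N^{−n} · Σ_{f : {1,…,n} → {0,…,N−1}} ( n^{−1/N} · Σ_{j=1}^{n} βω_{f(j)} )^m = 0. -/
open Complex Real Filter Finset

/-- If m is not a multiple of N, then for every n ≥ 1 the m-th moment of
the normalized random walk S̃_n = n^{-1/N}(ξ_1 + … + ξ_n), written as the finite average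
N^{−n} Σ_{f : Fin n → Fin N} (n^{−1/N} Σ_j β ω_{f(j)})^m, vanishes exactly. -/
theorem moment_vanishes (N : ℕ) (hN : 2 < N) (α β : ℂ) (hβ : β ^ N = α)
    (m : ℕ) (hm : ¬ N ∣ m) (n : ℕ) (hn : 1 ≤ n) :
    (1 / (N : ℂ) ^ n) *
      ∑ f : Fin n → Fin N,
        (((((n : ℝ) ^ ((N : ℝ)⁻¹)) : ℝ) : ℂ)⁻¹ *
          ∑ j : Fin n, β * Complex.exp (2 * Real.pi * Complex.I * (f j : ℕ) / N)) ^ m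
    = 0 := by
  have hN0 : N ≠ 0 := by omega
  have hNc : (N : ℂ) ≠ 0 := Nat.cast_ne_zero.mpr hN0
  set ω : ℂ := Complex.exp (2 * Real.pi * Complex.I / N) with hω
  have hprim : IsPrimitiveRoot ω N := Complex.isPrimitiveRoot_exp N hN0
  have hωN : ω ^ N = 1 := hprim.pow_eq_one
  have key : ∀ a : ℕ, Complex.exp (2 * Real.pi * Complex.I * a / N) = ω ^ a := by
    intro a
    rw [hω, ← Complex.exp_nat_mul]
    congr 1
    field_simp
  have hmod : ∀ a : ℕ, ω ^ (a % N) = ω ^ a := by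
    intro a
    conv_rhs => rw [← Nat.div_add_mod a N]
    rw [pow_add, pow_mul, hωN, one_pow, one_mul]
  set c : ℂ := (((((n : ℝ) ^ ((N : ℝ)⁻¹)) : ℝ) : ℂ))⁻¹ with hc
  set S : ℂ := ∑ f : Fin n → Fin N,
        (c * ∑ j : Fin n, β * Complex.exp (2 * Real.pi * Complex.I * (f j : ℕ) / N)) ^ m
    with hS
  haveI : NeZero N := ⟨hN0⟩
  have hrot : ω ^ m * S = S := by
    rw [hS, Finset.mul_sum]
    apply Fintype.sum_equiv (Equiv.arrowCongr (Equiv.refl (Fin n)) (Equiv.addRight (1 : Fin N)))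
    intro f
    have hterm : ∀ j : Fin n,
        β * Complex.exp (2 * Real.pi * Complex.I *
          (((Equiv.arrowCongr (Equiv.refl (Fin n)) (Equiv.addRight (1 : Fin N))) f j : ℕ)) / N)
        = ω * (β * Complex.exp (2 * Real.pi * Complex.I * (f j : ℕ) / N)) := by
      intro j
      have hval : (((Equiv.arrowCongr (Equiv.refl (Fin n)) (Equiv.addRight (1 : Fin N))) f j : ℕ))
          = ((f j : ℕ) + 1) % N := by
        simp [Equiv.arrowCongr, Fin.val_add, Fin.val_one', Nat.mod_eq_of_lt (show 1 < N by omega)]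
      rw [hval, key, key, hmod, pow_succ]
      ring
    have hsum : (∑ j : Fin n, β * Complex.exp (2 * Real.pi * Complex.I *
          (((Equiv.arrowCongr (Equiv.refl (Fin n)) (Equiv.addRight (1 : Fin N))) f j : ℕ)) / N))
        = ω * ∑ j : Fin n, β * Complex.exp (2 * Real.pi * Complex.I * (f j : ℕ) / N) := by
      rw [Finset.mul_sum]
      exact Finset.sum_congr rfl fun j _ => hterm j
    rw [hsum]
    ring
  have hωm : ω ^ m ≠ 1 := fun h => hm (hprim.pow_eq_one_iff_dvd m |>.mp h)
  have hS0 : S = 0 := by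
    have : (1 - ω ^ m) * S = 0 := by linear_combination -hrot
    rcases mul_eq_zero.mp this with h | h
    · exact absurd (by linear_combination -h) hωm
    · exact h
  rw [hS0, mul_zero]
end

section
/- The series Σ_{m=1}^{∞} (3m)!/((m!)^3 · 3^{3m}) diverges (the sequence m ↦ (3m)!/((m!)^3 · 3^{3m}) is not summable). Consequently, the expected number of returns to the origin of the random walk with steps uniform on the third roots of unity is infinite, i.e. the walk is recurrent. -/
/-!
The probabilities `p m = (3m)! / ((m!)³ 3^{3m})` satisfy
`p (m + 1) / p m = (3m + 1)(3m + 2) / (9 (m + 1)²) ≥ m / (m + 1)`, so `m * p m` is nondecreasing.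
Hence `p m ≥ p 1 / m`, and the series dominates a multiple of the harmonic series.
-/

open Nat

theorem not_summable_of_monotone_natCast_mul {f : ℕ → ℝ}
    (hf : Monotone fun n : ℕ => (n : ℝ) * f n) (h₁ : 0 < f 1) : ¬ Summable f := by
  intro hsum
  have hlower : ∀ n : ℕ, f 1 * (1 / ((n + 1 : ℕ) : ℝ)) ≤ f (n + 1) := by
    intro n
    have hmono : f 1 ≤ ((n + 1 : ℕ) : ℝ) * f (n + 1) := by
      simpa using hf (Nat.le_add_left 1 n)
    rw [mul_one_div, div_le_iff₀ (by positivity)]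
    linarith
  have hharmonic : Summable fun n : ℕ => 1 / ((n + 1 : ℕ) : ℝ) := by
    refine (((summable_nat_add_iff 1).2 hsum).of_nonneg_of_le (fun n => ?_) hlower).mul_left
      (f 1)⁻¹ |>.congr fun n => ?_
    · positivity
    · field_simp
  exact Real.not_summable_one_div_natCast ((summable_nat_add_iff 1).1 hharmonic)

noncomputable def trinomialReturnProb (m : ℕ) : ℝ :=
  ((3 * m)! : ℝ) / ((m ! : ℝ) ^ 3 * 3 ^ (3 * m))

theorem trinomialReturnProb_succ (m : ℕ) :
    trinomialReturnProb (m + 1) =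
      trinomialReturnProb m * ((3 * m + 1) * (3 * m + 2) / (9 * (m + 1) ^ 2)) := by
  have hfact : (3 * (m + 1))! = (3 * m + 3) * ((3 * m + 2) * ((3 * m + 1) * (3 * m)!)) := by
    rw [show 3 * (m + 1) = 3 * m + 2 + 1 by ring]
    simp only [Nat.factorial_succ]
  rw [trinomialReturnProb, trinomialReturnProb, hfact, Nat.factorial_succ m]
  push_cast
  field_simp
  ring

theorem trinomialReturnProb_pos (m : ℕ) : 0 < trinomialReturnProb m := by
  unfold trinomialReturnProb
  positivity

theorem monotone_natCast_mul_trinomialReturnProb :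
    Monotone fun m : ℕ => (m : ℝ) * trinomialReturnProb m := by
  refine monotone_nat_of_le_succ fun m => ?_
  have hratio : (m : ℝ) ≤ (m + 1) * ((3 * m + 1) * (3 * m + 2) / (9 * (m + 1) ^ 2)) := by
    rw [mul_div, le_div_iff₀ (by positivity)]
    nlinarith [m.cast_nonneg (α := ℝ)]
  rw [trinomialReturnProb_succ]
  push_cast
  nlinarith [mul_le_mul_of_nonneg_left hratio (trinomialReturnProb_pos m).le]

theorem trinomialReturnProb_one : trinomialReturnProb 1 = 2 / 9 := by
  norm_num [trinomialReturnProb, Nat.factorial]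

/-- the series Σ_{m≥1} (3m)!/((m!)³·3^{3m}) diverges, i.e. the sequence of
return probabilities of the random walk with steps uniform on the third roots of unity is
not summable; hence the expected number of returns to the origin is infinite and the walk
is recurrent. -/
theorem not_summable_return_probabilities_N3 :
    ¬ Summable (fun m : ℕ =>
      (Nat.factorial (3 * (m + 1)) : ℝ) /
        ((Nat.factorial (m + 1) : ℝ) ^ 3 * 3 ^ (3 * (m + 1)))) := by
  change ¬ Summable fun m => trinomialReturnProb (m + 1)
  rw [summable_nat_add_iff 1]
  refine not_summable_of_monotone_natCast_mul monotone_natCast_mul_trinomialReturnProb ?_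
  rw [trinomialReturnProb_one]
  norm_num
end

section
/- The series Σ_{m=1}^{∞} (5m)!/((m!)^5 · 5^{5m}) converges (the sequence m ↦ (5m)!/((m!)^5 · 5^{5m}) is summable). Consequently, the expected number of returns to the origin of the random walk with steps uniform on the fifth roots of unity is finite, i.e. the walk is transient. -/
/-!
Writing `x = 5m`, the ratio of consecutive terms is `(x+1)(x+2)(x+3)(x+4) / (x+5)^4`, and a
polynomial inequality shows that for `x ≥ 5` it is at most `(x / (x+5))^(3/2) = (m/(m+1))^(3/2)`.
Hence `m^(3/2)` times the `m`-th term is nonincreasing, the terms are `O(m^(-3/2))`, and the series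
is dominated by a convergent p-series. (The true decay is `m^(-2)`, but `m^2` times the term is
not monotone, so the exponent `3/2` is the convenient one.)
-/

open Real

theorem summable_of_antitone_mul_rpow {f : ℕ → ℝ} {p : ℝ} (hf : ∀ n, 0 ≤ f n) (hp : 1 < p)
    (h : Antitone fun n : ℕ => f n * ((n : ℝ) + 1) ^ p) : Summable f := by
  have hseries : Summable fun n : ℕ => f 0 * (1 / ((n : ℝ) + 1) ^ p) := by
    refine ((summable_one_div_nat_add_rpow 1 p).mpr hp).mul_left (f 0) |>.congr fun n => ?_
    rw [abs_of_pos (by positivity)]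
  refine hseries.of_nonneg_of_le hf fun n => ?_
  have hn : f n * ((n : ℝ) + 1) ^ p ≤ f 0 := by simpa using h (Nat.zero_le n)
  rw [mul_one_div, le_div_iff₀ (by positivity)]
  exact hn

noncomputable def returnProb (m : ℕ) : ℝ :=
  ((5 * m).factorial : ℝ) / ((m.factorial : ℝ) ^ 5 * 5 ^ (5 * m))

theorem returnProb_nonneg (m : ℕ) : 0 ≤ returnProb m := by
  unfold returnProb
  positivity

theorem returnProb_succ (m : ℕ) :
    returnProb (m + 1) = returnProb m *
      ((5 * m + 1) * (5 * m + 2) * (5 * m + 3) * (5 * m + 4) / (5 * m + 5) ^ 4) := by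
  have hfac : ((5 * (m + 1)).factorial : ℝ) =
      (5 * m + 1) * (5 * m + 2) * (5 * m + 3) * (5 * m + 4) * (5 * m + 5) *
        (5 * m).factorial := by
    rw [show 5 * (m + 1) = 5 * m + 4 + 1 by ring]
    simp only [Nat.factorial_succ]
    push_cast
    ring
  unfold returnProb
  rw [hfac, Nat.factorial_succ, show 5 * (m + 1) = 5 * m + 5 by ring, pow_add]
  push_cast
  field_simp

theorem sq_prod_add_le_pow_mul_pow {x : ℝ} (hx : 5 ≤ x) :
    ((x + 1) * (x + 2) * (x + 3) * (x + 4)) ^ 2 ≤ x ^ 3 * (x + 5) ^ 5 := by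
  have hx0 : 0 ≤ x := by linarith
  nlinarith [pow_nonneg hx0 3, pow_nonneg hx0 4, pow_nonneg hx0 5,
    mul_nonneg (sub_nonneg.2 hx) (pow_nonneg hx0 6),
    mul_nonneg (sub_nonneg.2 hx) (pow_nonneg hx0 3),
    mul_nonneg (sub_nonneg.2 hx) (pow_nonneg hx0 2)]

theorem prod_div_pow_mul_rpow_le {y : ℝ} (hy : 1 ≤ y) :
    (5 * y + 1) * (5 * y + 2) * (5 * y + 3) * (5 * y + 4) / (5 * y + 5) ^ 4 *
      (y + 1) ^ (3 / 2 : ℝ) ≤ y ^ (3 / 2 : ℝ) := by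
  have hsq : ∀ z : ℝ, 0 ≤ z → (z ^ (3 / 2 : ℝ)) ^ 2 = z ^ 3 := fun z hz => by
    rw [← rpow_natCast, ← rpow_mul hz]
    norm_num
  rw [← pow_le_pow_iff_left₀ (by positivity) (by positivity) two_ne_zero, mul_pow,
    hsq _ (by positivity), hsq _ (by positivity), div_pow, div_mul_eq_mul_div,
    div_le_iff₀ (by positivity)]
  have hpoly := mul_le_mul_of_nonneg_right (sq_prod_add_le_pow_mul_pow (x := 5 * y)
    (by linarith)) (pow_nonneg (by linarith : (0 : ℝ) ≤ 5 * y + 5) 3)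
  linear_combination hpoly / 125

theorem antitone_returnProb_succ_mul_rpow :
    Antitone fun m : ℕ => returnProb (m + 1) * ((m : ℝ) + 1) ^ (3 / 2 : ℝ) := by
  refine antitone_nat_of_succ_le fun m => ?_
  set y : ℝ := (m : ℝ) + 1
  calc returnProb (m + 1 + 1) * (((m + 1 : ℕ) : ℝ) + 1) ^ (3 / 2 : ℝ)
      = returnProb (m + 1) * ((5 * y + 1) * (5 * y + 2) * (5 * y + 3) * (5 * y + 4) /
          (5 * y + 5) ^ 4 * (y + 1) ^ (3 / 2 : ℝ)) := by
        rw [returnProb_succ]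
        push_cast
        ring
    _ ≤ returnProb (m + 1) * y ^ (3 / 2 : ℝ) :=
        mul_le_mul_of_nonneg_left (prod_div_pow_mul_rpow_le (by simp [y]))
          (returnProb_nonneg _)

/-- the series Σ_{m≥1} (5m)!/((m!)⁵·5^{5m}) converges, i.e. the sequence of
return probabilities of the random walk with steps uniform on the fifth roots of unity is
summable; hence the expected number of returns to the origin is finite and the walk is
transient. -/
theorem summable_return_probabilities_N5 :
    Summable (fun m : ℕ =>
      (Nat.factorial (5 * (m + 1)) : ℝ) /
        ((Nat.factorial (m + 1) : ℝ) ^ 5 * 5 ^ (5 * (m + 1)))) :=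
  summable_of_antitone_mul_rpow (fun m => returnProb_nonneg (m + 1)) (by norm_num)
    antitone_returnProb_succ_mul_rpow
end

section
/- For every real t > 0 and every complex λ, the characteristic functions of the walk at negative times converge: lim_{n→∞} ((1/N)·Σ_{k=0}^{N−1} exp( iλ·e^{iπ/N}·βω_k / n^{1/N} ))^{⌊nt⌋} = exp( i^N · λ^N · α · (−t) / N! ) = exp( −i^N λ^N α t / N! ). -/
/-!
Averaging `exp (z ω)` over the `N`-th roots of unity `ω` kills every Taylor coefficient of degree
not divisible by `N`, so the characteristic function of one step is `1 + z ^ N / N! + O(z ^ (N + 1))`.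
At `z = c / n ^ (1 / N)` this is `1 + c ^ N / (N! n) + o(1 / n)`, whose `⌊n t⌋`-th power tends to
`exp (t c ^ N / N!)`. For `c = i λ e^{iπ/N} β` the phase gives `c ^ N = -i ^ N λ ^ N α`.
-/

open Complex Real Filter Finset Asymptotics Topology
open scoped Nat

namespace IsPrimitiveRoot

variable {R : Type*} [CommRing R] [IsDomain R] {ζ : R} {N : ℕ}

theorem sum_pow_pow_eq (hζ : IsPrimitiveRoot ζ N) (j : ℕ) :
    ∑ k ∈ range N, (ζ ^ k) ^ j = if N ∣ j then (N : R) else 0 := by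
  simp_rw [← pow_mul, mul_comm _ j, pow_mul]
  split_ifs with h
  · simp [(hζ.pow_eq_one_iff_dvd j).2 h]
  · have hgeom := geom_sum_mul (ζ ^ j) N
    rw [pow_right_comm, hζ.pow_eq_one, one_pow, sub_self] at hgeom
    exact (mul_eq_zero.1 hgeom).resolve_right
      (sub_ne_zero.2 (mt (hζ.pow_eq_one_iff_dvd j).1 h))

end IsPrimitiveRoot

theorem IsPrimitiveRoot.sum_sum_range_pow_div_factorial {K : Type*} [Field K] {ζ : K} {N : ℕ}
    (hζ : IsPrimitiveRoot ζ N) (hN : 0 < N) (z : K) :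
    ∑ k ∈ range N, ∑ j ∈ range (N + 1), (z * ζ ^ k) ^ j / j ! = N * (1 + z ^ N / N !) := by
  rw [sum_comm]
  simp_rw [mul_pow, ← sum_div, ← mul_sum, hζ.sum_pow_pow_eq]
  obtain ⟨M, rfl⟩ := Nat.exists_eq_add_one_of_ne_zero hN.ne'
  have hmid : ∀ j ∈ range M, ¬ M + 1 ∣ j + 1 := fun j hj =>
    Nat.not_dvd_of_pos_of_lt j.succ_pos (by simpa using hj)
  rw [sum_range_succ, sum_range_succ', sum_congr rfl fun j hj => by rw [if_neg (hmid j hj)]]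
  simp only [mul_zero, zero_div, sum_const_zero, pow_zero, dvd_zero, ↓reduceIte, Nat.cast_add,
    Nat.cast_one, one_mul, Nat.factorial_zero, div_one, zero_add, dvd_refl]
  ring

theorem IsPrimitiveRoot.average_exp_sub_isBigO {ζ : ℂ} {N : ℕ} (hζ : IsPrimitiveRoot ζ N)
    (hN : 0 < N) :
    (fun z : ℂ => (N : ℂ)⁻¹ * ∑ k ∈ range N, exp (z * ζ ^ k) - (1 + z ^ N / N !))
      =O[𝓝 0] (· ^ (N + 1)) := by
  have hN' : (N : ℂ) ≠ 0 := Nat.cast_ne_zero.2 hN.ne'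
  have hrem : ∀ k ∈ range N,
      (fun z : ℂ => exp (z * ζ ^ k) - ∑ j ∈ range (N + 1), (z * ζ ^ k) ^ j / j !)
        =O[𝓝 0] (· ^ (N + 1)) := fun k _ => by
    have hlim : Tendsto (fun z : ℂ => z * ζ ^ k) (𝓝 0) (𝓝 0) := by
      simpa using (continuous_mul_const (ζ ^ k)).tendsto 0
    refine ((Complex.exp_sub_sum_range_isBigO_pow (N + 1)).comp_tendsto hlim).trans ?_
    simp_rw [Function.comp_def, mul_pow, mul_comm _ ((ζ ^ k) ^ (N + 1))]
    exact isBigO_const_mul_self _ _ _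
  refine ((IsBigO.fun_sum hrem).const_mul_left (N : ℂ)⁻¹).congr_left fun z => ?_
  rw [sum_sub_distrib, hζ.sum_sum_range_pow_div_factorial hN, mul_sub, inv_mul_cancel_left₀ hN']

theorem natCast_mul_div_rpow_inv_pow (c : ℂ) {n N : ℕ} (hn : n ≠ 0) (hN : N ≠ 0) :
    (n : ℂ) * (c / (((n : ℝ) ^ (N : ℝ)⁻¹ : ℝ) : ℂ)) ^ N = c ^ N := by
  rw [div_pow, ← ofReal_pow, Real.rpow_inv_natCast_pow (Nat.cast_nonneg n) hN, ofReal_natCast,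
    mul_div_cancel₀ _ (Nat.cast_ne_zero.2 hn)]

theorem tendsto_div_rpow_inv_natCast {N : ℕ} (hN : 0 < N) (c : ℂ) :
    Tendsto (fun n : ℕ => c / (((n : ℝ) ^ (N : ℝ)⁻¹ : ℝ) : ℂ)) atTop (𝓝 0) := by
  have hroot : Tendsto (fun n : ℕ => (n : ℝ) ^ (N : ℝ)⁻¹) atTop atTop :=
    (tendsto_rpow_atTop (by positivity)).comp tendsto_natCast_atTop_atTop
  simpa [div_eq_mul_inv] using (hroot.inv_tendsto_atTop.ofReal).const_mul c

theorem IsPrimitiveRoot.tendsto_mul_average_exp_sub_one {ζ : ℂ} {N : ℕ}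
    (hζ : IsPrimitiveRoot ζ N) (hN : 0 < N) (c : ℂ) :
    Tendsto (fun n : ℕ => (n : ℂ) * ((N : ℂ)⁻¹ *
        ∑ k ∈ range N, exp (c / (((n : ℝ) ^ (N : ℝ)⁻¹ : ℝ) : ℂ) * ζ ^ k) - 1))
      atTop (𝓝 (c ^ N / N !)) := by
  set z : ℕ → ℂ := fun n => c / (((n : ℝ) ^ (N : ℝ)⁻¹ : ℝ) : ℂ)
  have hz : Tendsto z atTop (𝓝 0) := tendsto_div_rpow_inv_natCast hN c
  have hscale : ∀ᶠ n : ℕ in atTop, (n : ℂ) * z n ^ N = c ^ N :=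
    eventually_ne_atTop 0 |>.mono fun n hn => natCast_mul_div_rpow_inv_pow c hn hN.ne'
  -- the error term is `O(n z_n ^ (N + 1)) = O(c ^ N z_n)`
  have herr : Tendsto (fun n : ℕ => (n : ℂ) *
      ((N : ℂ)⁻¹ * ∑ k ∈ range N, exp (z n * ζ ^ k) - (1 + z n ^ N / N !))) atTop (𝓝 0) := by
    refine ((isBigO_refl (fun n : ℕ => (n : ℂ)) atTop).mul
      ((hζ.average_exp_sub_isBigO hN).comp_tendsto hz)).trans_tendsto ?_
    have hlim : Tendsto (fun n => c ^ N * z n) atTop (𝓝 0) := by simpa using hz.const_mul (c ^ N)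
    refine hlim.congr' (hscale.mono fun n hn => ?_)
    simp only [Function.comp_apply, pow_succ, ← mul_assoc, hn]
  have := herr.add_const (c ^ N / N !)
  rw [zero_add] at this
  refine this.congr' (hscale.mono fun n hn => ?_)
  linear_combination -hn / (N ! : ℂ)

theorem Complex.tendsto_pow_nat_floor_mul_of_tendsto {u : ℕ → ℂ} {c : ℂ} {t : ℝ} (ht : 0 ≤ t)
    (hu : Tendsto (fun n : ℕ => (n : ℂ) * (u n - 1)) atTop (𝓝 c)) :
    Tendsto (fun n : ℕ => u n ^ ⌊(n : ℝ) * t⌋₊) atTop (𝓝 (exp (t * c))) := by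
  have hlog : Tendsto (fun n : ℕ => (n : ℂ) * log (u n)) atTop (𝓝 c) := by
    simpa using tendsto_nat_mul_log_one_add_of_tendsto hu
  have hfloor : Tendsto (fun n : ℕ => (⌊(n : ℝ) * t⌋₊ : ℂ) / n) atTop (𝓝 t) := by
    have := ((tendsto_nat_floor_mul_div_atTop ht).comp tendsto_natCast_atTop_atTop).ofReal
    simpa [mul_comm] using this
  have hu1 : Tendsto u atTop (𝓝 1) := by
    have := (tendsto_inv_atTop_nhds_zero_nat (𝕜 := ℂ)).mul hu
    rw [zero_mul, ← sub_self 1] at this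
    refine (tendsto_sub_const_iff 1).1 (this.congr' ?_)
    filter_upwards [eventually_ne_atTop 0] with n hn
    rw [inv_mul_cancel_left₀ (Nat.cast_ne_zero.2 hn)]
  refine ((continuous_exp.tendsto _).comp (hfloor.mul hlog)).congr' ?_
  filter_upwards [eventually_ne_atTop 0, hu1.eventually_ne one_ne_zero] with n hn hun
  rw [Function.comp_apply, ← mul_assoc, div_mul_cancel₀ _ (Nat.cast_ne_zero.2 hn), exp_nat_mul,
    exp_log hun]

/-- for every t > 0 and λ ∈ ℂ, the characteristic functions of the
continuous-time walk at negative times (increments multiplied by the phase e^{iπ/N})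
converge: lim_n ((1/N)Σ_{k<N} exp(iλe^{iπ/N}βω_k/n^{1/N}))^{⌊nt⌋}
= exp(i^N λ^N α (−t)/N!). -/
theorem char_fun_Wn_negative_time (N : ℕ) (hN : 2 < N) (α β : ℂ) (hβ : β ^ N = α)
    (t : ℝ) (ht : 0 < t) (l : ℂ) :
    Filter.Tendsto
      (fun n : ℕ =>
        ((1 / (N : ℂ)) *
          ∑ k ∈ Finset.range N,
            Complex.exp (Complex.I * l * Complex.exp (Real.pi * Complex.I / N) * β *
              Complex.exp (2 * Real.pi * Complex.I * k / N) /
                ((((n : ℝ) ^ ((N : ℝ)⁻¹)) : ℝ) : ℂ))) ^ ⌊(n : ℝ) * t⌋₊)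
      Filter.atTop
      (nhds (Complex.exp (Complex.I ^ N * l ^ N * α * (-(t : ℂ)) / (Nat.factorial N : ℂ)))) := by
  have hN0 : 0 < N := by omega
  have hζ := isPrimitiveRoot_exp N hN0.ne'
  set c := I * l * exp (π * I / N) * β
  have hphase : exp (π * I / N) ^ N = -1 := by
    rw [← Complex.exp_nat_mul, mul_div_cancel₀ _ (Nat.cast_ne_zero.2 hN0.ne'), exp_pi_mul_I]
  have hcN : c ^ N = -(I ^ N * l ^ N * α) := by
    simp only [c, mul_pow, hβ, hphase]
    ring
  have hroots : ∀ k : ℕ, exp (2 * π * I * k / N) = exp (2 * π * I / N) ^ k := fun k => by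
    rw [← Complex.exp_nat_mul]
    ring_nf
  convert tendsto_pow_nat_floor_mul_of_tendsto ht.le (hζ.tendsto_mul_average_exp_sub_one hN0 c)
    using 4 with n
  · exact one_div _
  · exact sum_congr rfl fun k _ => by rw [hroots, mul_div_right_comm]
  · rw [hcN]
    ring
end

section
/- Fix t ≥ 0, α ≠ 0 and λ ∈ ℂ with λ ≠ 0, and set K(t,α,λ) := |exp(i^N λ^N α t / N!)| · ( |α λ^N|/N! + |α|^2 · t · |λ|^{2N} · ( 1/(2(N!)^2) − 1/(2N)! ) ). Then for every ε > 0 there exists n_ε ∈ ℕ such that for all n > n_ε: | φ_n(t,λ) − exp(i^N λ^N α t / N!) | < (1+ε) · K(t,α,λ) / n. -/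
/-!
Put `z = iλβ / n^{1/N}`, so that `z^N = c/n` with `c = i^N λ^N α`. Averaging `exp (z ω)` over the
`N`-th roots of unity `ω` keeps exactly the Taylor coefficients of `exp` whose index is a multiple
of `N`, so the base of the power is `x_n = 1 + a/n + b/n² + O(n⁻³)` with `a = c/N!` and
`b = c²/(2N)!`, that is `x_n = exp(a/n) + (b - a²/2)/n² + O(n⁻³)`.

With `m = ⌊nt⌋` we have `exp(a/n)^m = exp(at) exp(w)` with `‖w‖ ≤ ‖a‖/n`, which costs
`‖exp(at)‖ ‖a‖/n + O(n⁻²)`, and replacing `exp(a/n)` by `x_n` in the `m ≤ nt` factors costs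
`‖exp(at)‖ t ‖b - a²/2‖/n + O(n⁻²)`. Finally `2 (N!)² ≤ (2N)!` gives
`‖b - a²/2‖ = |α|² |λ|^{2N} (1/(2(N!)²) - 1/(2N)!)`.
-/

open Complex Real Filter Finset

lemma sum_exp_two_pi_I_mul_div_pow {N : ℕ} (hN : N ≠ 0) (j : ℕ) :
    ∑ k ∈ range N, exp (2 * π * I * k / N) ^ j = if N ∣ j then (N : ℂ) else 0 := by
  have hζ := isPrimitiveRoot_exp N hN
  have hk (k : ℕ) : exp (2 * π * I * k / N) ^ j = (exp (2 * π * I / N) ^ j) ^ k := by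
    rw [← pow_mul, ← Complex.exp_nat_mul, ← Complex.exp_nat_mul]; push_cast; ring_nf
  simp only [hk]
  generalize exp (2 * π * I / N) = ζ at hζ
  split_ifs with h
  · simp [(hζ.pow_eq_one_iff_dvd j).2 h]
  · rw [geom_sum_eq ((hζ.pow_eq_one_iff_dvd j).not.2 h), ← pow_mul, mul_comm, pow_mul,
      hζ.pow_eq_one, one_pow, sub_self, zero_div]

lemma sum_range_mul_ite_dvd {M : Type*} [AddCommMonoid M] (g : ℕ → M) {N : ℕ} (hN : N ≠ 0)
    (K : ℕ) : ∑ i ∈ range (N * K), (if N ∣ i then g i else 0) = ∑ j ∈ range K, g (N * j) := by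
  rw [← sum_filter]
  have : (range (N * K)).filter (N ∣ ·) = (range K).image (N * ·) := by
    ext i
    simp only [mem_filter, mem_range, mem_image]
    constructor
    · rintro ⟨hi, j, rfl⟩
      exact ⟨j, Nat.lt_of_mul_lt_mul_left hi, rfl⟩
    · rintro ⟨j, hj, rfl⟩
      exact ⟨Nat.mul_lt_mul_of_pos_left hj (Nat.pos_of_ne_zero hN), dvd_mul_right N j⟩
  rw [this, sum_image fun i _ j _ h => Nat.eq_of_mul_eq_mul_left (Nat.pos_of_ne_zero hN) h]

lemma average_exp_mul_rootsOfUnity_sub_le {N : ℕ} (hN : N ≠ 0) (K : ℕ) (z : ℂ) :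
    ‖(1 / (N : ℂ)) * ∑ k ∈ range N, exp (z * exp (2 * π * I * k / N))
        - ∑ j ∈ range K, z ^ (N * j) / (N * j).factorial‖ ≤ ‖z‖ ^ (N * K) * Real.exp ‖z‖ := by
  have hω (k : ℕ) : ‖exp (2 * π * I * k / N)‖ = 1 := by
    rw [show 2 * π * I * k / N = ((2 * π * k / N : ℝ) : ℂ) * I by push_cast; ring]
    exact norm_exp_ofReal_mul_I _
  have hfilter : (1 / (N : ℂ)) * ∑ k ∈ range N, ∑ i ∈ range (N * K),
      (z * exp (2 * π * I * k / N)) ^ i / i.factorial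
        = ∑ j ∈ range K, z ^ (N * j) / (N * j).factorial := by
    simp_rw [mul_pow, mul_div_right_comm _ (cexp _ ^ _)]
    rw [sum_comm, mul_sum, ← sum_range_mul_ite_dvd (fun i => z ^ i / i.factorial) hN]
    refine sum_congr rfl fun i _ => ?_
    rw [← mul_sum, sum_exp_two_pi_I_mul_div_pow hN]
    split_ifs
    · field_simp
    · simp
  rw [← hfilter, ← mul_sub, ← sum_sub_distrib, norm_mul]
  calc ‖1 / (N : ℂ)‖ * ‖∑ k ∈ range N, (exp (z * exp (2 * π * I * k / N))
          - ∑ i ∈ range (N * K), (z * exp (2 * π * I * k / N)) ^ i / i.factorial)‖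
      ≤ ‖1 / (N : ℂ)‖ * ∑ k ∈ range N, ‖z‖ ^ (N * K) * Real.exp ‖z‖ := by
        gcongr
        refine (norm_sum_le _ _).trans (sum_le_sum fun k _ => ?_)
        simpa [hω] using norm_exp_sub_sum_le_norm_mul_exp (z * exp (2 * π * I * k / N)) (N * K)
    _ = ‖z‖ ^ (N * K) * Real.exp ‖z‖ := by
        rw [sum_const, card_range, nsmul_eq_mul, norm_div, norm_one, RCLike.norm_natCast]
        field_simp

lemma norm_one_add_pow_sub_one_le (u : ℂ) (m : ℕ) :
    ‖(1 + u) ^ m - 1‖ ≤ m * ‖u‖ * Real.exp (m * ‖u‖) := by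
  have hpow (i : ℕ) (hi : i ∈ range m) : ‖(1 + u) ^ i‖ ≤ Real.exp (m * ‖u‖) := calc
    ‖(1 + u) ^ i‖ ≤ (1 + ‖u‖) ^ i := by
      rw [norm_pow]; gcongr; exact (norm_add_le _ _).trans_eq (by rw [norm_one])
    _ ≤ Real.exp ‖u‖ ^ i := by gcongr; linarith [Real.add_one_le_exp ‖u‖]
    _ ≤ Real.exp (m * ‖u‖) := by
      rw [← Real.exp_nat_mul]; gcongr; exact_mod_cast (mem_range.1 hi).le
  calc ‖(1 + u) ^ m - 1‖ = ‖(∑ i ∈ range m, (1 + u) ^ i) * u‖ := by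
        rw [← geom_sum_mul, add_sub_cancel_left]
    _ ≤ (∑ _i ∈ range m, Real.exp (m * ‖u‖)) * ‖u‖ := by
        rw [norm_mul]; gcongr; exact (norm_sum_le _ _).trans (sum_le_sum hpow)
    _ = m * ‖u‖ * Real.exp (m * ‖u‖) := by rw [sum_const, card_range, nsmul_eq_mul]; ring

lemma norm_exp_sub_one_le_mul_exp (w : ℂ) : ‖exp w - 1‖ ≤ ‖w‖ * Real.exp ‖w‖ := by
  simpa using norm_exp_sub_sum_le_norm_mul_exp w 1

lemma exists_exp_div_pow_floor_eq (a : ℂ) {t : ℝ} (ht : 0 ≤ t) {n : ℕ} (hn : 0 < n) :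
    ∃ w : ℂ, ‖w‖ ≤ ‖a‖ * (n : ℝ)⁻¹ ∧ exp (a / n) ^ ⌊n * t⌋₊ = exp (a * t) * exp w := by
  have hn' : (0 : ℝ) < n := by exact_mod_cast hn
  have hfloor_le : (⌊n * t⌋₊ : ℝ) ≤ n * t := Nat.floor_le (by positivity)
  have hlt_floor : n * t < ⌊n * t⌋₊ + 1 := Nat.lt_floor_add_one _
  refine ⟨a * ((⌊n * t⌋₊ / n - t : ℝ) : ℂ), ?_, ?_⟩
  · rw [norm_mul, norm_real, Real.norm_eq_abs]
    gcongr
    rw [abs_le]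
    constructor
    · field_simp
      linarith
    · field_simp
      linarith
  · rw [← Complex.exp_nat_mul, ← Complex.exp_add]
    congr 1
    push_cast
    field_simp
    ring

lemma norm_pow_floor_sub_exp_le (a x : ℂ) {t D : ℝ} (ht : 0 ≤ t) {n : ℕ} (hn : 0 < n)
    (hx : ‖x - exp (a / n)‖ ≤ D * ((n : ℝ)⁻¹) ^ 2) :
    ‖x ^ ⌊n * t⌋₊ - exp (a * t)‖ ≤ ‖exp (a * t)‖ *
      (Real.exp (‖a‖ * (n : ℝ)⁻¹) * (‖a‖ + t * D * Real.exp (‖a‖ * (n : ℝ)⁻¹) *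
        Real.exp (t * D * Real.exp (‖a‖ * (n : ℝ)⁻¹) * (n : ℝ)⁻¹))) * (n : ℝ)⁻¹ := by
  set m := ⌊n * t⌋₊
  set s : ℝ := (n : ℝ)⁻¹
  set y := exp (a / n)
  set L := exp (a * t)
  set E := Real.exp (‖a‖ * s)
  set q := t * D * E * s
  have hDs : 0 ≤ D * s ^ 2 := (norm_nonneg _).trans hx
  have hD : 0 ≤ D := (mul_nonneg_iff_of_pos_right (by positivity)).1 hDs
  obtain ⟨w, hw, hyL⟩ := exists_exp_div_pow_floor_eq a ht hn
  have hwE : Real.exp ‖w‖ ≤ E := Real.exp_le_exp.2 hw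
  set u := (x - y) * exp (-(a / n))
  have hxu : x = y * (1 + u) := by
    simp only [u, y, Complex.exp_neg]
    field_simp
    ring
  have hu : m * ‖u‖ ≤ q := by
    have hdiv : ‖a / n‖ = ‖a‖ * s := by simp [s, div_eq_mul_inv]
    calc m * ‖u‖ ≤ (n * t) * (D * s ^ 2 * E) := by
          gcongr
          · exact Nat.floor_le (by positivity)
          · rw [norm_mul]
            gcongr
            exact (norm_exp_le_exp_norm _).trans (by rw [norm_neg, hdiv])
      _ = q := by simp only [q, s]; field_simp
  have hym : ‖y ^ m‖ ≤ ‖L‖ * E := by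
    rw [hyL, norm_mul]
    gcongr
    exact (norm_exp_le_exp_norm w).trans hwE
  have hxy : ‖x ^ m - y ^ m‖ ≤ ‖L‖ * E * (q * Real.exp q) := by
    rw [hxu, mul_pow, ← mul_sub_one, norm_mul]
    gcongr
    calc ‖(1 + u) ^ m - 1‖ ≤ m * ‖u‖ * Real.exp (m * ‖u‖) := norm_one_add_pow_sub_one_le u m
      _ ≤ q * Real.exp q := by gcongr
  have hyL' : ‖y ^ m - L‖ ≤ ‖L‖ * (‖a‖ * s * E) := by
    rw [hyL, ← mul_sub_one, norm_mul]
    gcongr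
    exact (norm_exp_sub_one_le_mul_exp w).trans (by gcongr)
  calc ‖x ^ m - L‖ ≤ ‖x ^ m - y ^ m‖ + ‖y ^ m - L‖ := norm_sub_le_norm_sub_add_norm_sub _ _ _
    _ ≤ ‖L‖ * E * (q * Real.exp q) + ‖L‖ * (‖a‖ * s * E) := add_le_add hxy hyL'
    _ = _ := by ring

lemma norm_exp_sub_quadratic_le (z : ℂ) :
    ‖exp z - (1 + z + z ^ 2 / 2)‖ ≤ ‖z‖ ^ 3 * Real.exp ‖z‖ := by
  simpa [sum_range_succ, Nat.factorial, add_assoc] using norm_exp_sub_sum_le_norm_mul_exp z 3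

open Asymptotics Topology in
theorem eventually_norm_pow_floor_sub_exp_lt {a : ℂ} (ha : a ≠ 0) (b : ℂ) {t : ℝ} (ht : 0 ≤ t)
    {x : ℕ → ℂ} (hx : (fun n : ℕ => x n - (1 + a / n + b / n ^ 2)) =O[atTop]
      fun n => ((n : ℝ)⁻¹) ^ 3) {ε : ℝ} (hε : 0 < ε) :
    ∀ᶠ n : ℕ in atTop, ‖x n ^ ⌊n * t⌋₊ - exp (a * t)‖ <
      (1 + ε) * (‖exp (a * t)‖ * (‖a‖ + t * ‖b - a ^ 2 / 2‖)) / n := by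
  obtain ⟨C, hC⟩ := hx.bound
  set A := ‖a‖
  set B := ‖b - a ^ 2 / 2‖
  set C' := C + A ^ 3 * Real.exp A
  have hclose : ∀ᶠ n : ℕ in atTop,
      ‖x n - exp (a / n)‖ ≤ (B + C' * (n : ℝ)⁻¹) * ((n : ℝ)⁻¹) ^ 2 := by
    filter_upwards [hC, eventually_ge_atTop 1] with n hCn hn
    set s : ℝ := (n : ℝ)⁻¹
    have hs0 : 0 ≤ s := by positivity
    have hs1 : s ≤ 1 := inv_le_one_of_one_le₀ (by exact_mod_cast hn)
    have has : ‖a / n‖ = A * s := by simp [A, s, div_eq_mul_inv]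
    have hsplit : x n - exp (a / n) = (x n - (1 + a / n + b / n ^ 2))
        - (exp (a / n) - (1 + a / n + (a / n) ^ 2 / 2)) + (b - a ^ 2 / 2) * (s : ℂ) ^ 2 := by
      simp only [s]; push_cast; ring
    rw [hsplit]
    refine (norm_add_le _ _).trans ((add_le_add (norm_sub_le _ _) le_rfl).trans ?_)
    rw [norm_mul, norm_pow, norm_real, Real.norm_of_nonneg hs0]
    have hexp := norm_exp_sub_quadratic_le (a / n)
    rw [has] at hexp
    rw [norm_pow, Real.norm_of_nonneg hs0] at hCn
    calc _ ≤ C * s ^ 3 + (A * s) ^ 3 * Real.exp A + B * s ^ 2 := by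
          gcongr
          exact hexp.trans (by gcongr; exact mul_le_of_le_one_right (norm_nonneg a) hs1)
      _ = (B + C' * s) * s ^ 2 := by ring
  set g : ℝ → ℝ := fun s => Real.exp (A * s) * (A + t * (B + C' * s) * Real.exp (A * s) *
    Real.exp (t * (B + C' * s) * Real.exp (A * s) * s))
  have hg : Tendsto (fun n : ℕ => g (n : ℝ)⁻¹) atTop (𝓝 (A + t * B)) := by
    have hcont : Continuous g := by fun_prop
    have hg0 : g 0 = A + t * B := by simp [g]
    exact hg0 ▸ (hcont.tendsto 0).comp tendsto_inv_atTop_nhds_zero_nat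
  have hA : 0 < A := norm_pos_iff.2 ha
  have hlt : A + t * B < (1 + ε) * (A + t * B) := by
    nlinarith [mul_nonneg ht (norm_nonneg (b - a ^ 2 / 2))]
  have hL : 0 < ‖exp (a * t)‖ := norm_pos_iff.2 (Complex.exp_ne_zero _)
  filter_upwards [hclose, hg.eventually_lt_const hlt, eventually_gt_atTop 0] with n hn hgn hpos
  calc ‖x n ^ ⌊n * t⌋₊ - exp (a * t)‖ ≤ ‖exp (a * t)‖ * g (n : ℝ)⁻¹ * (n : ℝ)⁻¹ :=
        norm_pow_floor_sub_exp_le a (x n) ht hpos hn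
    _ < ‖exp (a * t)‖ * ((1 + ε) * (A + t * B)) * (n : ℝ)⁻¹ := by gcongr
    _ = _ := by ring

open Nat in
lemma two_mul_factorial_sq_le {N : ℕ} (hN : N ≠ 0) : 2 * N ! ^ 2 ≤ (2 * N)! := by
  have hchoose : 2 ≤ (N + N).choose N := by
    simpa [Nat.centralBinom_eq_two_mul_choose, two_mul] using
      Nat.two_le_centralBinom N (Nat.pos_of_ne_zero hN)
  calc 2 * N ! ^ 2 ≤ (N + N).choose N * N ! * N ! := by rw [sq, ← mul_assoc]; gcongr
    _ = (2 * N)! := by rw [Nat.add_choose_mul_factorial_mul_factorial, two_mul]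

open Nat in
lemma norm_sq_div_factorial_two_mul_sub_eq {N : ℕ} (hN : N ≠ 0) (c : ℂ) :
    ‖c ^ 2 / (2 * N)! - (c / N !) ^ 2 / 2‖ = ‖c‖ ^ 2 * (1 / (2 * N ! ^ 2) - 1 / (2 * N)!) := by
  have hle : (2 * N ! ^ 2 : ℝ) ≤ (2 * N)! := by exact_mod_cast two_mul_factorial_sq_le hN
  have hcoef : c ^ 2 / (2 * N)! - (c / N !) ^ 2 / 2
      = c ^ 2 * ((1 / (2 * N)! - 1 / (2 * N ! ^ 2) : ℝ) : ℂ) := by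
    push_cast; ring
  rw [hcoef, norm_mul, norm_pow, norm_real, Real.norm_eq_abs,
    abs_of_nonpos (sub_nonpos.2 (by gcongr)), neg_sub]

lemma ofReal_rpow_inv_natCast_pow {N : ℕ} (hN : N ≠ 0) (n : ℕ) :
    (((n : ℝ) ^ (N : ℝ)⁻¹ : ℝ) : ℂ) ^ N = n := by
  rw [← ofReal_pow, Real.rpow_inv_natCast_pow (Nat.cast_nonneg n) hN, ofReal_natCast]

open Asymptotics Nat in
lemma average_exp_mul_rootsOfUnity_isBigO {N : ℕ} (hN : N ≠ 0) {c : ℂ} {z : ℕ → ℂ}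
    (hz : ∀ n : ℕ, z n ^ N = c / n) :
    (fun n : ℕ => (1 / (N : ℂ)) * ∑ k ∈ range N, exp (z n * exp (2 * π * I * k / N))
        - (1 + c / N ! / n + c ^ 2 / (2 * N)! / n ^ 2)) =O[atTop] fun n => ((n : ℝ)⁻¹) ^ 3 := by
  refine IsBigO.of_bound (‖c‖ ^ 3 * Real.exp 1) ?_
  filter_upwards [eventually_ge_atTop ⌈‖c‖⌉₊, eventually_gt_atTop 0] with n hcn hn
  have hzN : ‖z n‖ ^ N = ‖c‖ * (n : ℝ)⁻¹ := by rw [← norm_pow, hz]; simp [div_eq_mul_inv]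
  have hz1 : ‖z n‖ ≤ 1 := by
    refine (pow_le_one_iff_of_nonneg (norm_nonneg _) hN).1 ?_
    rw [hzN, ← div_eq_mul_inv, div_le_one (by exact_mod_cast hn)]
    exact Nat.ceil_le.1 hcn
  have hsum : ∑ j ∈ range 3, z n ^ (N * j) / (N * j)!
      = 1 + c / N ! / n + c ^ 2 / (2 * N)! / n ^ 2 := by
    simp only [sum_range_succ, range_zero, sum_empty, mul_zero, pow_zero, Nat.factorial_zero,
      pow_mul, hz]
    ring_nf
  have := average_exp_mul_rootsOfUnity_sub_le hN 3 (z n)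
  rw [hsum, pow_mul, hzN] at this
  refine this.trans ?_
  rw [norm_pow, norm_inv, RCLike.norm_natCast, mul_pow, mul_right_comm]
  gcongr

/-- rate of convergence. Fix t ≥ 0, α ≠ 0, λ ≠ 0, and set
K(t,α,λ) = |exp(i^N λ^N α t/N!)|·(|αλ^N|/N! + |α|²t|λ|^{2N}(1/(2(N!)²) − 1/(2N)!)).
For every ε > 0 there is n_ε such that for all n > n_ε,
|φ_n(t,λ) − exp(i^N λ^N α t/N!)| < (1+ε)·K(t,α,λ)/n, where
φ_n(t,λ) = ((1/N)Σ_{k<N} exp(iλβω_k/n^{1/N}))^{⌊nt⌋}. -/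
theorem rate_of_convergence (N : ℕ) (hN : 2 < N) (α β : ℂ) (hβ : β ^ N = α)
    (hα : α ≠ 0) (t : ℝ) (ht : 0 ≤ t) (l : ℂ) (hl : l ≠ 0) (ε : ℝ) (hε : 0 < ε) :
    ∃ nε : ℕ, ∀ n : ℕ, nε < n →
      ‖(((1 / (N : ℂ)) *
          ∑ k ∈ Finset.range N,
            Complex.exp (Complex.I * l * β * Complex.exp (2 * Real.pi * Complex.I * k / N) /
              ((((n : ℝ) ^ ((N : ℝ)⁻¹)) : ℝ) : ℂ))) ^ ⌊(n : ℝ) * t⌋₊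
          - Complex.exp (Complex.I ^ N * l ^ N * α * (t : ℂ) / (Nat.factorial N : ℂ)))‖
      < (1 + ε) *
          (‖(Complex.exp (Complex.I ^ N * l ^ N * α * (t : ℂ) / (Nat.factorial N : ℂ)))‖ *
            (‖(α * l ^ N)‖ / (Nat.factorial N : ℝ)
              + ‖α‖ ^ 2 * t * ‖l‖ ^ (2 * N) *
                (1 / (2 * ((Nat.factorial N : ℝ)) ^ 2) - 1 / (Nat.factorial (2 * N) : ℝ))))
        / n := by
  have hN0 : N ≠ 0 := by omega
  set c : ℂ := I ^ N * l ^ N * α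
  set a : ℂ := c / N.factorial
  have ha : a ≠ 0 := by simp [a, c, hl, hα, Nat.factorial_ne_zero]
  have hz (n : ℕ) : (I * l * β / (((n : ℝ) ^ (N : ℝ)⁻¹ : ℝ) : ℂ)) ^ N = c / n := by
    rw [div_pow, ofReal_rpow_inv_natCast_pow hN0, mul_pow, mul_pow, hβ]
  obtain ⟨n₀, hn₀⟩ := eventually_atTop.1 <| eventually_norm_pow_floor_sub_exp_lt ha
    (c ^ 2 / (2 * N).factorial) ht (average_exp_mul_rootsOfUnity_isBigO hN0 hz) hε
  refine ⟨n₀, fun n hn => ?_⟩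
  have hc : ‖c‖ = ‖α * l ^ N‖ := by simp [c, mul_comm]
  have hK : ‖a‖ + t * ‖c ^ 2 / (2 * N).factorial - a ^ 2 / 2‖
      = ‖α * l ^ N‖ / N.factorial + ‖α‖ ^ 2 * t * ‖l‖ ^ (2 * N) *
        (1 / (2 * (N.factorial : ℝ) ^ 2) - 1 / (2 * N).factorial) := by
    rw [norm_sq_div_factorial_two_mul_sub_eq hN0, norm_div, hc, norm_mul, norm_pow,
      RCLike.norm_natCast]
    ring
  have hexp : I ^ N * l ^ N * α * t / N.factorial = a * t := by ring
  rw [hexp, ← hK]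
  simp only [mul_div_right_comm (I * l * β)]
  exact hn₀ n hn.le
end

section
/- Assume conditions (1), (2) as before and additionally (3): for every s ∈ (T₁,T₂), ∫ |y|^N · |exp(i^N α s y^N / N!)| · |g(y)| dν(y) < ∞. Then u(t,x) := ∫ e^{ixy} exp(i^N α t y^N / N!) g(y) dν(y) is a classical solution of the Cauchy problem ∂_t u = (α/N!) ∂_x^N u with u(0,x) = f(x): for every t ∈ (T₁,T₂) and x ∈ ℝ the time derivative ∂_t u(t,x) exists, the N-th spatial derivative ∂_x^N u(t,x) (the N-fold iterated derivative of u(t,·) at x) exists, and ∂_t u(t,x) = (α/N!) ∂_x^N u(t,x) = (i^N α / N!) ∫ y^N e^{ixy} exp(i^N α t y^N / N!) g(y) dν(y), with this integral absolutely convergent; moreover u(0,x) = f(x). -/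
/-!
Both derivatives come from differentiating under the integral sign. In `x`, the `k`-th
derivative of `x ↦ ∫ e^{ixy} h(y) dν(y)` is `∫ (iy)^k e^{ixy} h(y) dν(y)` as long as the moments
`∫ |y|^n |h| dν`, `n ≤ k`, are finite; for `h = exp(i^N α t y^N/N!) g` these moments are
controlled by (2) and (3) at time `t`. In `t`, the integrand picks up the factor
`c(y) = i^N α y^N/N!`, and for `s` in a compact interval `[t₁, t₂] ⊂ (T₁, T₂)` one has
`|e^{c s}| ≤ |e^{c t₁}| + |e^{c t₂}|`, so (3) at the endpoints dominates the derivative.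
Comparing the two results gives `∂_t u = (α/N!) ∂_x^N u`.
-/

open Complex Real Filter Finset MeasureTheory

/-- The function u(t,x) = ∫ e^{ixy} exp(i^N α t y^N/N!) g(y) dν(y), candidate solution of
∂_t u = (α/N!) ∂_x^N u with initial datum f(x) = ∫ e^{ixy} g(y) dν(y). -/
noncomputable def uSol (N : ℕ) (α : ℂ) (ν : MeasureTheory.Measure ℝ) (g : ℝ → ℂ)
    (t : ℝ) (x : ℝ) : ℂ :=
  ∫ y : ℝ, Complex.exp (Complex.I * x * y) *
    Complex.exp (Complex.I ^ N * α * (t : ℂ) * (y : ℂ) ^ N / (Nat.factorial N : ℂ)) *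
    g y ∂ν

lemma Real.exp_mul_le_exp_mul_add_exp_mul {r a b s : ℝ} (ha : a ≤ s) (hb : s ≤ b) :
    Real.exp (r * s) ≤ Real.exp (r * a) + Real.exp (r * b) := by
  rcases le_total 0 r with hr | hr
  · exact (Real.exp_le_exp.2 (mul_le_mul_of_nonneg_left hb hr)).trans
      (le_add_of_nonneg_left (Real.exp_pos _).le)
  · exact (Real.exp_le_exp.2 (mul_le_mul_of_nonpos_left ha hr)).trans
      (le_add_of_nonneg_right (Real.exp_pos _).le)

lemma integrable_pow_mul_norm_of_le {E : Type*} [NormedAddCommGroup E] {ν : Measure ℝ}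
    {f : ℝ → E} (hf : AEStronglyMeasurable f ν) {n N : ℕ} (hn : n ≤ N)
    (h₀ : Integrable (fun y => ‖f y‖) ν) (hN : Integrable (fun y => |y| ^ N * ‖f y‖) ν) :
    Integrable (fun y => |y| ^ n * ‖f y‖) ν := by
  refine (h₀.add hN).mono' ((continuous_abs.pow n).aestronglyMeasurable.mul hf.norm) ?_
  filter_upwards with y
  have hpow : |y| ^ n ≤ 1 + |y| ^ N := by
    rcases le_total |y| 1 with hy | hy
    · exact (pow_le_one₀ (abs_nonneg y) hy).trans (le_add_of_nonneg_right (by positivity))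
    · exact (pow_le_pow_right₀ hy hn).trans (le_add_of_nonneg_left zero_le_one)
  rw [Real.norm_of_nonneg (by positivity)]
  calc |y| ^ n * ‖f y‖ ≤ (1 + |y| ^ N) * ‖f y‖ := by gcongr
    _ = ‖f y‖ + |y| ^ N * ‖f y‖ := by ring

noncomputable def fourierMoment (ν : Measure ℝ) (h : ℝ → ℂ) (k : ℕ) (x : ℝ) : ℂ :=
  ∫ y, (I * y) ^ k * cexp (I * x * y) * h y ∂ν

section fourierMoment

variable {ν : Measure ℝ} {h : ℝ → ℂ}

lemma norm_fourierMoment_integrand (k : ℕ) (x y : ℝ) :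
    ‖(I * y) ^ k * cexp (I * x * y) * h y‖ = |y| ^ k * ‖h y‖ := by
  simp [Complex.norm_exp]

lemma aestronglyMeasurable_fourierMoment_integrand (hh : AEStronglyMeasurable h ν)
    (k : ℕ) (x : ℝ) :
    AEStronglyMeasurable (fun y : ℝ => (I * y) ^ k * cexp (I * x * y) * h y) ν :=
  (Continuous.aestronglyMeasurable (by fun_prop)).mul hh

lemma integrable_fourierMoment_integrand (hh : AEStronglyMeasurable h ν) {k : ℕ}
    (hk : Integrable (fun y => |y| ^ k * ‖h y‖) ν) (x : ℝ) :
    Integrable (fun y : ℝ => (I * y) ^ k * cexp (I * x * y) * h y) ν :=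
  hk.mono' (aestronglyMeasurable_fourierMoment_integrand hh k x)
    (.of_forall fun y => (norm_fourierMoment_integrand k x y).le)

lemma hasDerivAt_cexp_I_mul_mul (x y : ℝ) :
    HasDerivAt (fun x : ℝ => cexp (I * x * y)) (I * y * cexp (I * x * y)) x := by
  have := (((hasDerivAt_id x).ofReal_comp.const_mul I).mul_const (y : ℂ)).cexp
  simpa [mul_comm] using this

lemma hasDerivAt_fourierMoment (hh : AEStronglyMeasurable h ν) {k : ℕ}
    (hk : Integrable (fun y => |y| ^ k * ‖h y‖) ν)
    (hk' : Integrable (fun y => |y| ^ (k + 1) * ‖h y‖) ν) (x : ℝ) :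
    HasDerivAt (fourierMoment ν h k) (fourierMoment ν h (k + 1) x) x :=
  (hasDerivAt_integral_of_dominated_loc_of_deriv_le
    (F' := fun x y => (I * y) ^ (k + 1) * cexp (I * x * y) * h y) (Metric.ball_mem_nhds x one_pos)
    (.of_forall fun x' => aestronglyMeasurable_fourierMoment_integrand hh k x')
    (integrable_fourierMoment_integrand hh hk x)
    (aestronglyMeasurable_fourierMoment_integrand hh (k + 1) x)
    (.of_forall fun y x' _ => (norm_fourierMoment_integrand (k + 1) x' y).le) hk'
    (.of_forall fun y x' _ =>
      (((hasDerivAt_cexp_I_mul_mul x' y).const_mul ((I * y) ^ k)).mul_const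
        (h y)).congr_deriv (by ring))).2

lemma continuous_fourierMoment (hh : AEStronglyMeasurable h ν) {k : ℕ}
    (hk : Integrable (fun y => |y| ^ k * ‖h y‖) ν) : Continuous (fourierMoment ν h k) :=
  continuous_of_dominated (fun x => aestronglyMeasurable_fourierMoment_integrand hh k x)
    (fun x => .of_forall fun y => (norm_fourierMoment_integrand k x y).le) hk
    (.of_forall fun y => by fun_prop)

lemma contDiff_fourierMoment (hh : AEStronglyMeasurable h ν) {k m : ℕ}
    (hint : ∀ n ≤ k + m, Integrable (fun y => |y| ^ n * ‖h y‖) ν) :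
    ContDiff ℝ m (fourierMoment ν h k) := by
  induction m generalizing k with
  | zero => exact contDiff_zero.2 (continuous_fourierMoment hh (hint k le_rfl))
  | succ m ih =>
    have hderiv x := hasDerivAt_fourierMoment hh (hint k (by omega)) (hint (k + 1) (by omega)) x
    rw [Nat.cast_succ, contDiff_succ_iff_deriv]
    refine ⟨fun x => (hderiv x).differentiableAt, by simp, ?_⟩
    rw [funext fun x => (hderiv x).deriv]
    exact ih fun n hn => hint n (by omega)

lemma iteratedDeriv_fourierMoment (hh : AEStronglyMeasurable h ν) {k : ℕ}
    (hint : ∀ n ≤ k, Integrable (fun y => |y| ^ n * ‖h y‖) ν) :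
    iteratedDeriv k (fourierMoment ν h 0) = fourierMoment ν h k := by
  induction k with
  | zero => simp
  | succ k ih =>
    rw [iteratedDeriv_succ, ih fun n hn => hint n (by omega)]
    exact funext fun x =>
      (hasDerivAt_fourierMoment hh (hint k (by omega)) (hint (k + 1) le_rfl) x).deriv

end fourierMoment

lemma hasDerivAt_integral_cexp_mul_mul {ν : Measure ℝ} {a c : ℝ → ℂ}
    (ha : AEStronglyMeasurable a ν) (hc : AEStronglyMeasurable c ν) {t₁ t t₂ : ℝ}
    (ht : t ∈ Set.Ioo t₁ t₂) (hint : Integrable (fun y => ‖cexp (c y * t)‖ * ‖a y‖) ν)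
    (hint₁ : Integrable (fun y => ‖c y‖ * ‖cexp (c y * t₁)‖ * ‖a y‖) ν)
    (hint₂ : Integrable (fun y => ‖c y‖ * ‖cexp (c y * t₂)‖ * ‖a y‖) ν) :
    HasDerivAt (fun s : ℝ => ∫ y, cexp (c y * s) * a y ∂ν)
      (∫ y, c y * cexp (c y * t) * a y ∂ν) t := by
  have hexp (s : ℝ) : AEStronglyMeasurable (fun y => cexp (c y * s)) ν :=
    continuous_exp.comp_aestronglyMeasurable (hc.mul_const _)
  refine (hasDerivAt_integral_of_dominated_loc_of_deriv_le
    (F' := fun s y => c y * cexp (c y * s) * a y) (Ioo_mem_nhds ht.1 ht.2)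
    (.of_forall fun s => (hexp s).mul ha)
    (hint.mono' ((hexp t).mul ha) (.of_forall fun y => (norm_mul _ _).le))
    ((hc.mul (hexp t)).mul ha) (.of_forall fun y s hs => ?_) (hint₁.add hint₂)
    (.of_forall fun y s _ => ?_)).2
  · have hbound := Real.exp_mul_le_exp_mul_add_exp_mul (r := (c y).re) hs.1.le hs.2.le
    simp only [norm_mul, Complex.norm_exp, re_mul_ofReal, Pi.add_apply]
    calc _ ≤ ‖c y‖ * (Real.exp ((c y).re * t₁) + Real.exp ((c y).re * t₂)) * ‖a y‖ := by
          gcongr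
      _ = _ := by ring
  · exact (((hasDerivAt_id s).ofReal_comp.const_mul (c y)).cexp.mul_const (a y)).congr_deriv
      (by simp [mul_comm])

lemma uSol_phase_eq (N : ℕ) (α : ℂ) (s y : ℝ) :
    I ^ N * α * (s : ℂ) * (y : ℂ) ^ N / (N.factorial : ℂ)
      = I ^ N * α * (y : ℂ) ^ N / (N.factorial : ℂ) * s := by
  ring

lemma hasDerivAt_uSol_time {N : ℕ} {α : ℂ} {ν : Measure ℝ} {g : ℝ → ℂ}
    (hg : AEStronglyMeasurable g ν) {t₁ t t₂ : ℝ} (ht : t ∈ Set.Ioo t₁ t₂) (x : ℝ)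
    (hint : Integrable (fun y : ℝ =>
      ‖cexp (I ^ N * α * (t : ℂ) * (y : ℂ) ^ N / (N.factorial : ℂ))‖ * ‖g y‖) ν)
    (hint₁ : Integrable (fun y : ℝ =>
      |y| ^ N * ‖cexp (I ^ N * α * (t₁ : ℂ) * (y : ℂ) ^ N / (N.factorial : ℂ))‖ * ‖g y‖) ν)
    (hint₂ : Integrable (fun y : ℝ =>
      |y| ^ N * ‖cexp (I ^ N * α * (t₂ : ℂ) * (y : ℂ) ^ N / (N.factorial : ℂ))‖ * ‖g y‖) ν) :
    HasDerivAt (fun s : ℝ => uSol N α ν g s x)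
      ((α / (N.factorial : ℂ)) * (I ^ N * ∫ y : ℝ, (y : ℂ) ^ N * cexp (I * x * y) *
        cexp (I ^ N * α * (t : ℂ) * (y : ℂ) ^ N / (N.factorial : ℂ)) * g y ∂ν)) t := by
  simp_rw [uSol, uSol_phase_eq] at hint hint₁ hint₂ ⊢
  set c : ℝ → ℂ := fun y => I ^ N * α * (y : ℂ) ^ N / (N.factorial : ℂ)
  have hc (y : ℝ) : ‖c y‖ = ‖I ^ N * α / (N.factorial : ℂ)‖ * |y| ^ N := by
    simp [c]; ring
  have ha (y : ℝ) : ‖cexp (I * x * y) * g y‖ = ‖g y‖ := by simp [Complex.norm_exp]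
  have hdom {s : ℝ} (hs : Integrable (fun y => |y| ^ N * ‖cexp (c y * s)‖ * ‖g y‖) ν) :
      Integrable (fun y => ‖c y‖ * ‖cexp (c y * s)‖ * ‖cexp (I * x * y) * g y‖) ν :=
    (hs.const_mul ‖I ^ N * α / (N.factorial : ℂ)‖).congr
      (.of_forall fun y => by simp only [hc, ha]; ring)
  convert hasDerivAt_integral_cexp_mul_mul (a := fun y => cexp (I * x * y) * g y) (c := c)
    ((Continuous.aestronglyMeasurable (by fun_prop)).mul hg)
    (Continuous.aestronglyMeasurable (by fun_prop)) ht (by simpa only [ha] using hint)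
    (hdom hint₁) (hdom hint₂) using 1
  · ext s
    congr 1 with y
    ring
  · rw [← integral_const_mul, ← integral_const_mul]
    congr 1 with y
    ring

lemma uSol_eq_fourierMoment (N : ℕ) (α : ℂ) (ν : Measure ℝ) (g : ℝ → ℂ) (t : ℝ) :
    (fun x : ℝ => uSol N α ν g t x)
      = fourierMoment ν (fun y => cexp (I ^ N * α * (t : ℂ) * (y : ℂ) ^ N /
          (N.factorial : ℂ)) * g y) 0 := by
  ext x
  simp only [uSol, fourierMoment, pow_zero, one_mul, mul_assoc]

theorem classical_solution_general (N : ℕ) (α : ℂ)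
    (ν : Measure ℝ) (g : ℝ → ℂ) (hg : Integrable g ν)
    (T₁ T₂ : ℝ)
    (h2 : ∀ s ∈ Set.Ioo T₁ T₂,
      Integrable (fun y : ℝ =>
        ‖Complex.exp (Complex.I ^ N * α * (s : ℂ) * (y : ℂ) ^ N /
          (Nat.factorial N : ℂ))‖ * ‖g y‖) ν)
    (h3 : ∀ s ∈ Set.Ioo T₁ T₂,
      Integrable (fun y : ℝ =>
        |y| ^ N * ‖Complex.exp (Complex.I ^ N * α * (s : ℂ) * (y : ℂ) ^ N /
          (Nat.factorial N : ℂ))‖ * ‖g y‖) ν)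
    (t : ℝ) (ht : t ∈ Set.Ioo T₁ T₂) (x : ℝ) :
    Integrable (fun y : ℝ => (y : ℂ) ^ N * Complex.exp (Complex.I * x * y) *
        Complex.exp (Complex.I ^ N * α * (t : ℂ) * (y : ℂ) ^ N / (Nat.factorial N : ℂ)) *
        g y) ν
    ∧ HasDerivAt (fun s : ℝ => uSol N α ν g s x)
        ((α / (Nat.factorial N : ℂ)) *
          (Complex.I ^ N *
            ∫ y : ℝ, (y : ℂ) ^ N * Complex.exp (Complex.I * x * y) *
              Complex.exp (Complex.I ^ N * α * (t : ℂ) * (y : ℂ) ^ N /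
                (Nat.factorial N : ℂ)) * g y ∂ν)) t
    ∧ ContDiff ℝ N (fun x' : ℝ => uSol N α ν g t x')
    ∧ iteratedDeriv N (fun x' : ℝ => uSol N α ν g t x') x
        = Complex.I ^ N *
            ∫ y : ℝ, (y : ℂ) ^ N * Complex.exp (Complex.I * x * y) *
              Complex.exp (Complex.I ^ N * α * (t : ℂ) * (y : ℂ) ^ N /
                (Nat.factorial N : ℂ)) * g y ∂ν
    ∧ uSol N α ν g 0 x = ∫ y : ℝ, Complex.exp (Complex.I * x * y) * g y ∂ν := by
  set h : ℝ → ℂ := fun y => cexp (I ^ N * α * (t : ℂ) * (y : ℂ) ^ N / (N.factorial : ℂ)) * g y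
  have hh : AEStronglyMeasurable h ν := (Continuous.aestronglyMeasurable (by fun_prop)).mul hg.1
  have hmoments : ∀ n ≤ N, Integrable (fun y => |y| ^ n * ‖h y‖) ν := fun n hn =>
    integrable_pow_mul_norm_of_le hh hn (by simpa [h] using h2 t ht)
      (by simpa [h, mul_assoc] using h3 t ht)
  obtain ⟨t₁, ht₁, ht₁t⟩ := exists_between ht.1
  obtain ⟨t₂, htt₂, ht₂⟩ := exists_between ht.2
  refine ⟨?_, hasDerivAt_uSol_time hg.1 ⟨ht₁t, htt₂⟩ x (h2 t ht) (h3 t₁ ⟨ht₁, by linarith⟩)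
    (h3 t₂ ⟨by linarith, ht₂⟩), ?_, ?_, by simp [uSol]⟩
  · exact (hmoments N le_rfl).mono' (Continuous.aestronglyMeasurable (by fun_prop) |>.mul hg.1)
      (.of_forall fun y => by simp [h, Complex.norm_exp, mul_assoc])
  · exact uSol_eq_fourierMoment N α ν g t ▸ contDiff_fourierMoment hh (by simpa using hmoments)
  · rw [uSol_eq_fourierMoment, iteratedDeriv_fourierMoment hh hmoments, fourierMoment,
      ← integral_const_mul]
    congr 1 with y
    ring

/-- under the assumptions (1), (2) and the additional assumption (3),
u(t,x) = ∫ e^{ixy} exp(i^N α t y^N/N!) g(y) dν(y) is a classical solution of the Cauchy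
problem ∂_t u = (α/N!) ∂_x^N u with u(0,x) = f(x): the time derivative exists and equals
(α/N!) times the N-th spatial derivative, both equal to
(i^N α/N!) ∫ y^N e^{ixy} exp(i^N α t y^N/N!) g(y) dν(y), the integral being absolutely
convergent. -/
theorem classical_solution (N : ℕ) (hN : 2 < N) (α : ℂ)
    (ν : Measure ℝ) [IsFiniteMeasure ν] (g : ℝ → ℂ) (hg : Integrable g ν)
    (h1 : ∀ c : ℝ, 0 < c →
      Integrable (fun y : ℝ => Real.exp (c * |y|) * ‖g y‖) ν)
    (T₁ T₂ : ℝ) (hT₁ : T₁ < 0) (hT₂ : 0 < T₂)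
    (h2 : ∀ s ∈ Set.Ioo T₁ T₂,
      Integrable (fun y : ℝ =>
        ‖Complex.exp (Complex.I ^ N * α * (s : ℂ) * (y : ℂ) ^ N /
          (Nat.factorial N : ℂ))‖ * ‖g y‖) ν)
    (h3 : ∀ s ∈ Set.Ioo T₁ T₂,
      Integrable (fun y : ℝ =>
        |y| ^ N * ‖Complex.exp (Complex.I ^ N * α * (s : ℂ) * (y : ℂ) ^ N /
          (Nat.factorial N : ℂ))‖ * ‖g y‖) ν)
    (t : ℝ) (ht : t ∈ Set.Ioo T₁ T₂) (x : ℝ) :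
    Integrable (fun y : ℝ => (y : ℂ) ^ N * Complex.exp (Complex.I * x * y) *
        Complex.exp (Complex.I ^ N * α * (t : ℂ) * (y : ℂ) ^ N / (Nat.factorial N : ℂ)) *
        g y) ν
    ∧ HasDerivAt (fun s : ℝ => uSol N α ν g s x)
        ((α / (Nat.factorial N : ℂ)) *
          (Complex.I ^ N *
            ∫ y : ℝ, (y : ℂ) ^ N * Complex.exp (Complex.I * x * y) *
              Complex.exp (Complex.I ^ N * α * (t : ℂ) * (y : ℂ) ^ N /
                (Nat.factorial N : ℂ)) * g y ∂ν)) t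
    ∧ ContDiff ℝ N (fun x' : ℝ => uSol N α ν g t x')
    ∧ iteratedDeriv N (fun x' : ℝ => uSol N α ν g t x') x
        = Complex.I ^ N *
            ∫ y : ℝ, (y : ℂ) ^ N * Complex.exp (Complex.I * x * y) *
              Complex.exp (Complex.I ^ N * α * (t : ℂ) * (y : ℂ) ^ N /
                (Nat.factorial N : ℂ)) * g y ∂ν
    ∧ uSol N α ν g 0 x = ∫ y : ℝ, Complex.exp (Complex.I * x * y) * g y ∂ν :=
  classical_solution_general N α ν g hg T₁ T₂ h2 h3 t ht x
end

section
/- Let N > 2 be an even integer and α ∈ ℂ. Assume ∫ e^{c|y|} |g(y)| dν(y) < ∞ for every c > 0, and let t ∈ ℝ be such that ∫ |exp(i^N α t y^N / N!)| |g(y)| dν(y) < ∞. If the function f(x) = ∫ e^{ixy} g(y) dν(y) is odd on ℝ (f(−x) = −f(x) for all x ∈ ℝ), then the solution at time t, u(t,x) := ∫ e^{ixy} exp(i^N α t y^N / N!) g(y) dν(y), is also odd: u(t,−x) = −u(t,x) for all x ∈ ℝ; in particular u(t,0) = 0, so the Dirichlet boundary condition at the origin is preserved in time. -/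
/-!
The complex measure `μ = g • ν` has an odd Fourier transform. Writing a Schwartz function `ψ`
as the inverse Fourier transform of `𝓕 ψ` and using Fubini, the oddness transfers to
`∫ ψ(-y) dμ = -∫ ψ(y) dμ`; multiplying a smooth `φ` by cutoffs and passing to the limit extends
this to every smooth `φ` for which both sides converge absolutely. Since `N` is even, the
multiplier `m(y) = exp(i^N α t y^N / N!)` is even, and `φ(y) = e^{ixy} m(y)` gives the oddness
of `u(t, ·)`.
-/

open Complex Real Filter MeasureTheory FourierTransform Topology
open scoped ContDiff SchwartzMap

noncomputable def charFunWithDensity (ν : Measure ℝ) (g : ℝ → ℂ) (x : ℝ) : ℂ :=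
  ∫ y, Complex.exp (Complex.I * x * y) * g y ∂ν

lemma norm_exp_I_mul_ofReal_mul_ofReal (a b : ℝ) :
    ‖Complex.exp (Complex.I * a * b)‖ = 1 := by
  rw [show Complex.I * a * b = (a * b : ℝ) * Complex.I by push_cast; ring,
    Complex.norm_exp_ofReal_mul_I]

lemma MeasureTheory.Integrable.exp_I_mul {ν : Measure ℝ} {F : ℝ → ℂ} (hF : Integrable F ν)
    (a : ℝ) : Integrable (fun y : ℝ ↦ Complex.exp (Complex.I * a * y) * F y) ν :=
  hF.bdd_mul (by fun_prop : Continuous _).aestronglyMeasurable (c := 1)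
    (.of_forall fun y ↦ (norm_exp_I_mul_ofReal_mul_ofReal a y).le)

noncomputable def cutoffBump (n : ℕ) : ContDiffBump (0 : ℝ) :=
  ⟨n + 1, n + 2, by positivity, by linarith⟩

lemma tendsto_integral_cutoffBump_mul {ν : Measure ℝ} {F : ℝ → ℂ} (hF : Integrable F ν) :
    Tendsto (fun n ↦ ∫ y, (cutoffBump n y : ℂ) * F y ∂ν) atTop (𝓝 (∫ y, F y ∂ν)) := by
  refine tendsto_integral_of_dominated_convergence (‖F ·‖)
    (fun n ↦ (Complex.continuous_ofReal.comp (cutoffBump n).continuous).aestronglyMeasurable.mul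
      hF.1) hF.norm (fun n ↦ .of_forall fun y ↦ ?_) (.of_forall fun y ↦ ?_)
  · rw [norm_mul, Complex.norm_real, Real.norm_of_nonneg (cutoffBump n).nonneg]
    exact mul_le_of_le_one_left (norm_nonneg _) (cutoffBump n).le_one
  · refine tendsto_const_nhds.congr' ?_
    filter_upwards [eventually_ge_atTop ⌈|y|⌉₊] with n hn
    rw [(cutoffBump n).one_of_mem_closedBall, Complex.ofReal_one, one_mul]
    rw [Metric.mem_closedBall, Real.dist_0_eq_abs]
    show |y| ≤ n + 1
    linarith [Nat.ceil_le.mp hn]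

section OddDensity

variable {ν : Measure ℝ} [SFinite ν] {g : ℝ → ℂ}

lemma integral_fourier_mul_eq_integral_mul_charFunWithDensity (hg : Integrable g ν)
    {K : ℝ → ℂ} (hK : Integrable K) :
    ∫ y, 𝓕 K y * g y ∂ν = ∫ ξ, K ξ * charFunWithDensity ν g (-(2 * π * ξ)) := by
  have hkernel : ∀ ξ y : ℝ, Complex.exp (↑(-2 * π * ξ * y) * Complex.I)
      = Complex.exp (Complex.I * (-(2 * π * ξ) : ℝ) * y) := fun ξ y ↦ by
    congr 1; push_cast; ring
  have hint : Integrable (Function.uncurry fun y ξ : ℝ ↦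
      Complex.exp (Complex.I * (-(2 * π * ξ) : ℝ) * y) * (g y * K ξ)) (ν.prod volume) :=
    (hg.mul_prod hK).bdd_mul (by fun_prop : Continuous _).aestronglyMeasurable (c := 1)
      (.of_forall fun _ ↦ (norm_exp_I_mul_ofReal_mul_ofReal _ _).le)
  calc ∫ y, 𝓕 K y * g y ∂ν
      = ∫ y : ℝ, (∫ ξ : ℝ, Complex.exp (Complex.I * (-(2 * π * ξ) : ℝ) * y) * (g y * K ξ)) ∂ν := by
        refine integral_congr_ae (.of_forall fun y ↦ ?_)
        simp only [fourier_real_eq_integral_exp_smul, smul_eq_mul, ← integral_mul_const]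
        refine integral_congr_ae (.of_forall fun ξ ↦ ?_)
        simp only [hkernel]
        ring
    _ = ∫ ξ : ℝ, ∫ y : ℝ, Complex.exp (Complex.I * (-(2 * π * ξ) : ℝ) * y) * (g y * K ξ) ∂ν :=
        integral_integral_swap hint
    _ = ∫ ξ, K ξ * charFunWithDensity ν g (-(2 * π * ξ)) := by
        simp only [charFunWithDensity, ← integral_const_mul]
        congr 1; ext ξ; congr 1; ext y
        ring

lemma SchwartzMap.integral_comp_neg_mul_eq_neg (hg : Integrable g ν)
    (hodd : Function.Odd (charFunWithDensity ν g)) (ψ : 𝓢(ℝ, ℂ)) :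
    ∫ y, ψ (-y) * g y ∂ν = -∫ y, ψ y * g y ∂ν := by
  set K : ℝ → ℂ := 𝓕 ⇑ψ
  have hK : Integrable K := (𝓕 ψ).integrable
  have hψ : ∀ y, ψ y = 𝓕⁻ K y := fun y ↦ by
    rw [ψ.continuous.fourierInv_fourier_eq ψ.integrable hK]
  calc ∫ y, ψ (-y) * g y ∂ν
      = ∫ ξ, K ξ * charFunWithDensity ν g (-(2 * π * ξ)) := by
        simp only [hψ, fourierInv_eq_fourier_neg, neg_neg]
        exact integral_fourier_mul_eq_integral_mul_charFunWithDensity hg hK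
    _ = -∫ ξ, K (-ξ) * charFunWithDensity ν g (-(2 * π * ξ)) := by
        rw [← integral_neg_eq_self, ← integral_neg]
        simp only [mul_neg, neg_neg, hodd _]
    _ = -∫ y, ψ y * g y ∂ν := by
        simp only [hψ, fourierInv_eq_fourier_comp_neg]
        rw [integral_fourier_mul_eq_integral_mul_charFunWithDensity hg hK.comp_neg]

lemma ContDiff.integral_comp_neg_mul_eq_neg {φ : ℝ → ℂ} (hφ : ContDiff ℝ ∞ φ)
    (hg : Integrable g ν) (hodd : Function.Odd (charFunWithDensity ν g))
    (hφg : Integrable (fun y ↦ φ y * g y) ν) (hφg' : Integrable (fun y ↦ φ (-y) * g y) ν) :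
    ∫ y, φ (-y) * g y ∂ν = -∫ y, φ y * g y ∂ν := by
  have hcut : ∀ n, ∫ y, (cutoffBump n y : ℂ) * (φ (-y) * g y) ∂ν
      = -∫ y, (cutoffBump n y : ℂ) * (φ y * g y) ∂ν := fun n ↦ by
    let ψ : 𝓢(ℝ, ℂ) :=
      HasCompactSupport.toSchwartzMap (f := fun y ↦ (cutoffBump n y : ℂ) * φ y)
        ((cutoffBump n).hasCompactSupport.comp_left Complex.ofReal_zero).mul_right
        ((Complex.ofRealCLM.contDiff.comp (cutoffBump n).contDiff).mul hφ)
    have hψ : ∀ y, ψ y = cutoffBump n y * φ y := fun _ ↦ rfl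
    simpa only [hψ, (cutoffBump n).neg, mul_assoc] using ψ.integral_comp_neg_mul_eq_neg hg hodd
  refine tendsto_nhds_unique (tendsto_integral_cutoffBump_mul hφg') ?_
  simp only [hcut]
  exact (tendsto_integral_cutoffBump_mul hφg).neg

end OddDensity

theorem odd_datum_preserved_general (N : ℕ) (hNe : Even N) (α : ℂ)
    (ν : Measure ℝ) [IsFiniteMeasure ν] (g : ℝ → ℂ) (hg : Integrable g ν)
    (t : ℝ)
    (ht : Integrable (fun y : ℝ =>
      ‖Complex.exp (Complex.I ^ N * α * (t : ℂ) * (y : ℂ) ^ N /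
        (Nat.factorial N : ℂ))‖ * ‖g y‖) ν)
    (hodd : ∀ x : ℝ,
      (∫ y : ℝ, Complex.exp (Complex.I * (-x : ℝ) * y) * g y ∂ν)
        = -∫ y : ℝ, Complex.exp (Complex.I * x * y) * g y ∂ν) :
    (∀ x : ℝ,
      (∫ y : ℝ, Complex.exp (Complex.I * (-x : ℝ) * y) *
          Complex.exp (Complex.I ^ N * α * (t : ℂ) * (y : ℂ) ^ N / (Nat.factorial N : ℂ)) *
          g y ∂ν)
        = -∫ y : ℝ, Complex.exp (Complex.I * x * y) *
            Complex.exp (Complex.I ^ N * α * (t : ℂ) * (y : ℂ) ^ N / (Nat.factorial N : ℂ)) *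
            g y ∂ν)
    ∧ (∫ y : ℝ, Complex.exp (Complex.I * (0 : ℝ) * y) *
          Complex.exp (Complex.I ^ N * α * (t : ℂ) * (y : ℂ) ^ N / (Nat.factorial N : ℂ)) *
          g y ∂ν) = 0 := by
  set m : ℝ → ℂ := fun y ↦
    Complex.exp (Complex.I ^ N * α * (t : ℂ) * (y : ℂ) ^ N / (Nat.factorial N : ℂ))
  have hm_even : Function.Even m := fun y ↦ by simp only [m, ofReal_neg, hNe.neg_pow]
  have hofReal : ContDiff ℝ ∞ ((↑) : ℝ → ℂ) := ofRealCLM.contDiff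
  have hm : ContDiff ℝ ∞ m := by fun_prop
  have hmg : Integrable (fun y ↦ m y * g y) ν :=
    ht.mono' (hm.continuous.aestronglyMeasurable.mul hg.1) (.of_forall fun y ↦ (norm_mul _ _).le)
  have hsol : ∀ x : ℝ, ∫ y, Complex.exp (Complex.I * (-x : ℝ) * y) * m y * g y ∂ν
      = -∫ y, Complex.exp (Complex.I * x * y) * m y * g y ∂ν := fun x ↦ by
    have hφ : ∀ y : ℝ, Complex.exp (Complex.I * x * (-y : ℝ)) * m (-y)
        = Complex.exp (Complex.I * (-x : ℝ) * y) * m y := fun y ↦ by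
      rw [hm_even]; push_cast; ring_nf
    have hφ_smooth : ContDiff ℝ ∞ fun y : ℝ ↦ Complex.exp (Complex.I * x * y) * m y := by
      fun_prop
    simpa only [hφ] using hφ_smooth.integral_comp_neg_mul_eq_neg hg hodd
      (by simpa only [mul_assoc] using hmg.exp_I_mul x)
      ((hmg.exp_I_mul (-x)).congr (.of_forall fun y ↦ by dsimp only; rw [hφ]; ring))
  refine ⟨hsol, ?_⟩
  simpa [CharZero.eq_neg_self_iff] using hsol 0

/-- for N > 2 even, if the initial datum f(x) = ∫ e^{ixy} g(y) dν(y) is odd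
on ℝ, then so is the solution at time t, u(t,x) = ∫ e^{ixy} exp(i^N α t y^N/N!) g(y) dν(y):
u(t,−x) = −u(t,x) for all x; in particular u(t,0) = 0, so the Dirichlet boundary condition
at the origin is preserved in time. -/
theorem odd_datum_preserved (N : ℕ) (hN : 2 < N) (hNe : Even N) (α : ℂ)
    (ν : Measure ℝ) [IsFiniteMeasure ν] (g : ℝ → ℂ) (hg : Integrable g ν)
    (h1 : ∀ c : ℝ, 0 < c →
      Integrable (fun y : ℝ => Real.exp (c * |y|) * ‖g y‖) ν)
    (t : ℝ)
    (ht : Integrable (fun y : ℝ =>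
      ‖Complex.exp (Complex.I ^ N * α * (t : ℂ) * (y : ℂ) ^ N /
        (Nat.factorial N : ℂ))‖ * ‖g y‖) ν)
    (hodd : ∀ x : ℝ,
      (∫ y : ℝ, Complex.exp (Complex.I * (-x : ℝ) * y) * g y ∂ν)
        = -∫ y : ℝ, Complex.exp (Complex.I * x * y) * g y ∂ν) :
    (∀ x : ℝ,
      (∫ y : ℝ, Complex.exp (Complex.I * (-x : ℝ) * y) *
          Complex.exp (Complex.I ^ N * α * (t : ℂ) * (y : ℂ) ^ N / (Nat.factorial N : ℂ)) *
          g y ∂ν)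
        = -∫ y : ℝ, Complex.exp (Complex.I * x * y) *
            Complex.exp (Complex.I ^ N * α * (t : ℂ) * (y : ℂ) ^ N / (Nat.factorial N : ℂ)) *
            g y ∂ν)
    ∧ (∫ y : ℝ, Complex.exp (Complex.I * (0 : ℝ) * y) *
          Complex.exp (Complex.I ^ N * α * (t : ℂ) * (y : ℂ) ^ N / (Nat.factorial N : ℂ)) *
          g y ∂ν) = 0 :=
  odd_datum_preserved_general N hNe α ν g hg t ht hodd
end
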